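/- Let K ⊆ ℝ² be a compact convex set with nonempty interior, and let P be an extreme point of K. Then the set of angles θ (taken in ℝ/2πℤ) such that the support line L_θ of K contains P is a closed arc of length strictly less than π, where L_θ denotes the support line of K in direction θ (the line containing a ray making angle θ with the x-axis that has K on its left side). -/

import Mathlib

open Real Set

noncomputable section

/-- The plane. -/
abbrev Plane := EuclideanSpace ℝ (Fin 2)

/-- 2D cross product. -/
def crossProd (u v : Plane) : ℝ := u 0 * v 1 - u 1 * v 0

/-- Unit vector in direction θ. -/
def dirVec (θ : ℝ) : Plane := WithLp.toLp 2 ![Real.cos θ, Real.sin θ]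

/-- The support line of `K` in direction `θ`: the line with direction `(cos θ, sin θ)`
having `K` on its closed left side and touching `K`. -/
def suppLine (K : Set Plane) (θ : ℝ) : Set Plane :=
  {x | crossProd (dirVec θ) x = sInf ((fun p => crossProd (dirVec θ) p) '' K)}

/-- Convex hull of the image of an arc parametrized on `[0,1]`. -/
def hullOf (γ : ℝ → Plane) : Set Plane := convexHull ℝ (γ '' Icc 0 1)

/-- Parameters at which the arc touches the support line of its hull in direction θ. -/
def touchSet (γ : ℝ → Plane) (θ : ℝ) : Set ℝ :=
  {s ∈ Icc (0:ℝ) 1 | γ s ∈ suppLine (hullOf γ) θ}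

/-- The multi-valued function `T`: the extreme touching parameters. -/
def T (γ : ℝ → Plane) (θ : ℝ) : Set ℝ :=
  {sInf (touchSet γ θ), sSup (touchSet γ θ)}

/-- `γ` is piecewise linear ("polygonal") on `[0,1]`. -/
def IsPolygonal (γ : ℝ → Plane) : Prop :=
  ∃ (n : ℕ) (t : Fin (n + 1) → ℝ), t 0 = 0 ∧ t (Fin.last n) = 1 ∧ StrictMono t ∧
    ∀ i : Fin n, ∀ s ∈ Icc (t i.castSucc) (t i.succ),
      γ s = γ (t i.castSucc) + ((s - t i.castSucc) / (t i.succ - t i.castSucc)) •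
        (γ (t i.succ) - γ (t i.castSucc))

/-- The set of directions (within one period) whose support line passes through `P`. -/
def touchAngles (K : Set Plane) (P : Plane) : Set ℝ := {θ ∈ Ico 0 (2*π) | P ∈ suppLine K θ}

/-- The exterior angle of a convex body `K` at a boundary point `P`, measured as the
length of the set of support directions through `P`. -/
def extAngle (K : Set Plane) (P : Plane) : ℝ := (MeasureTheory.volume (touchAngles K P)).toReal

/-- Largest parameter of a hull corner (extreme point). -/
def tLast (γ : ℝ → Plane) : ℝ :=
  sSup {s ∈ Icc (0:ℝ) 1 | γ s ∈ Set.extremePoints ℝ (hullOf γ)}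

/-- Smallest parameter of a hull corner (extreme point). -/
def tFirst (γ : ℝ → Plane) : ℝ :=
  sInf {s ∈ Icc (0:ℝ) 1 | γ s ∈ Set.extremePoints ℝ (hullOf γ)}

/-- The pair of support lines `L_θ`, `L_{θ+δ}` has *triple points*: parameters
`s₁ < s₂ < s₃` with the middle point on one line and the outer two on the other. -/
def HasTriple (γ : ℝ → Plane) (θ δ : ℝ) : Prop :=
  ∃ s₁ s₂ s₃ : ℝ, s₁ ∈ Icc (0:ℝ) 1 ∧ s₂ ∈ Icc (0:ℝ) 1 ∧ s₃ ∈ Icc (0:ℝ) 1 ∧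
    s₁ < s₂ ∧ s₂ < s₃ ∧
    ((γ s₂ ∈ suppLine (hullOf γ) θ ∧ γ s₁ ∈ suppLine (hullOf γ) (θ + δ) ∧
        γ s₃ ∈ suppLine (hullOf γ) (θ + δ)) ∨
     (γ s₂ ∈ suppLine (hullOf γ) (θ + δ) ∧ γ s₁ ∈ suppLine (hullOf γ) θ ∧
        γ s₃ ∈ suppLine (hullOf γ) θ))

/-! The support directions through `P` form a closed, `2π`-periodic set of angles, and with any
two angles `θ₁ ≤ θ₂` at distance `< π` it contains all of `[θ₁, θ₂]`, because `dirVec θ` is a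
nonnegative combination of `dirVec θ₁` and `dirVec θ₂`. Writing an interior point as
`Q = P + r • dirVec φ`, `Q` lies strictly inside every support line through `P`, which forces
`sin (φ - θ) > 0`: modulo `2π` all support directions lie in the open half-turn `(φ - π, φ)`,
so the set is a single closed arc of length `< π`. It is nonempty by the supporting hyperplane
theorem, an extreme point being a boundary point. -/

lemma mem_Ioo_of_sin_sub_pos {θ φ : ℝ} (h : 0 < sin (φ - θ)) (h₁ : φ - π ≤ θ)
    (h₂ : θ ≤ φ + π) : θ ∈ Ioo (φ - π) φ := by
  refine ⟨h₁.lt_of_ne ?_, lt_of_not_ge fun hφ => h.not_ge ?_⟩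
  · rintro rfl
    simp at h
  · exact sin_nonpos_of_nonpos_of_neg_pi_le (by linarith) (by linarith)

lemma exists_add_two_pi_mul_int_mem_Ioo {θ φ : ℝ} (h : 0 < sin (φ - θ)) :
    ∃ k : ℤ, θ + 2 * π * k ∈ Ioo (φ - π) φ := by
  set k := toIocDiv two_pi_pos (φ - π) θ
  have hmod := toIocMod_mem_Ioc two_pi_pos (φ - π) θ
  rw [← self_sub_toIocDiv_zsmul, zsmul_eq_mul] at hmod
  refine ⟨-k, mem_Ioo_of_sin_sub_pos ?_ ?_ ?_⟩
  · rw [show φ - (θ + 2 * π * (-k : ℤ)) = φ - θ + k * (2 * π) by push_cast; ring,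
      sin_add_int_mul_two_pi]
    exact h
  · push_cast; linarith [hmod.1]
  · push_cast; linarith [hmod.2]

lemma exists_short_arc_of_sin_sub_pos {S : Set ℝ} {φ : ℝ} (hS : IsClosed S) (hne : S.Nonempty)
    (hper : ∀ θ ∈ S, ∀ k : ℤ, θ + 2 * π * k ∈ S) (hsin : ∀ θ ∈ S, 0 < sin (φ - θ))
    (hIcc : ∀ θ₁ ∈ S, ∀ θ₂ ∈ S, θ₂ - θ₁ < π → Icc θ₁ θ₂ ⊆ S) :
    ∃ α l : ℝ, 0 ≤ l ∧ l < π ∧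
      ∀ θ : ℝ, θ ∈ S ↔ ∃ t ∈ Icc α (α + l), ∃ k : ℤ, θ = t + 2 * π * k := by
  set S₀ := S ∩ Icc (φ - π) φ
  have hS₀ : IsCompact S₀ := isCompact_Icc.inter_left hS
  have hS₀Ioo : S₀ ⊆ Ioo (φ - π) φ := fun θ hθ =>
    mem_Ioo_of_sin_sub_pos (hsin θ hθ.1) hθ.2.1 (by linarith [hθ.2.2, pi_pos])
  have hrep : ∀ θ ∈ S, ∃ k : ℤ, θ + 2 * π * k ∈ S₀ := fun θ hθ =>
    (exists_add_two_pi_mul_int_mem_Ioo (hsin θ hθ)).imp fun k hk =>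
      ⟨hper θ hθ k, Ioo_subset_Icc_self hk⟩
  have hne₀ : S₀.Nonempty :=
    let ⟨θ₀, hθ₀⟩ := hne; let ⟨_, hk⟩ := hrep θ₀ hθ₀; ⟨_, hk⟩
  set α := sInf S₀
  set β := sSup S₀
  have hα : α ∈ S₀ := hS₀.sInf_mem hne₀
  have hβ : β ∈ S₀ := hS₀.sSup_mem hne₀
  have hβα : β - α < π := by linarith [(hS₀Ioo hα).1, (hS₀Ioo hβ).2]
  refine ⟨α, β - α, sub_nonneg.2 (csInf_le_csSup hne₀ hS₀.bddBelow hS₀.bddAbove), hβα,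
    fun θ => ⟨fun hθ => ?_, ?_⟩⟩
  · obtain ⟨k, hk⟩ := hrep θ hθ
    refine ⟨_, ⟨csInf_le hS₀.bddBelow hk, ?_⟩, -k, by push_cast; ring⟩
    simpa using le_csSup hS₀.bddAbove hk
  · rintro ⟨t, ht, k, rfl⟩
    exact hper t (hIcc α hα.1 β hβ.1 hβα (by simpa using ht)) k

lemma crossProd_add_left (u v x : Plane) :
    crossProd (u + v) x = crossProd u x + crossProd v x := by
  simp only [crossProd, PiLp.add_apply]; ring

lemma crossProd_smul_left (c : ℝ) (u x : Plane) : crossProd (c • u) x = c * crossProd u x := by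
  simp only [crossProd, PiLp.smul_apply, smul_eq_mul]; ring

lemma crossProd_sub_right (u x y : Plane) :
    crossProd u (x - y) = crossProd u x - crossProd u y := by
  simp only [crossProd, PiLp.sub_apply]; ring

lemma crossProd_smul_right (c : ℝ) (u x : Plane) : crossProd u (c • x) = c * crossProd u x := by
  simp only [crossProd, PiLp.smul_apply, smul_eq_mul]; ring

lemma continuous_crossProd_right (u : Plane) : Continuous (crossProd u) := by
  unfold crossProd; fun_prop

lemma exists_crossProd_eq_neg_apply (f : Plane →ₗ[ℝ] ℝ) :
    ∃ v : Plane, ∀ x, crossProd v x = -f x := by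
  refine ⟨WithLp.toLp 2 ![-f (EuclideanSpace.single 1 1), f (EuclideanSpace.single 0 1)],
    fun x => ?_⟩
  have hx : x = x 0 • EuclideanSpace.single 0 1 + x 1 • EuclideanSpace.single 1 1 := by
    ext i; fin_cases i <;> simp
  conv_rhs => rw [hx]
  simp only [crossProd, Matrix.cons_val_zero, Matrix.cons_val_one, Matrix.cons_val_fin_one,
    map_add, map_smul, smul_eq_mul]
  ring

lemma crossProd_dirVec_dirVec (θ φ : ℝ) : crossProd (dirVec θ) (dirVec φ) = sin (φ - θ) := by
  simp only [crossProd, dirVec, Matrix.cons_val_zero, Matrix.cons_val_one,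
    Matrix.cons_val_fin_one, sin_sub]
  ring

lemma dirVec_add_two_pi_mul_int (θ : ℝ) (k : ℤ) : dirVec (θ + 2 * π * k) = dirVec θ := by
  rw [dirVec, show θ + 2 * π * k = θ + k * (2 * π) by ring, cos_add_int_mul_two_pi,
    sin_add_int_mul_two_pi, dirVec]

lemma sin_sub_smul_dirVec (θ₁ θ θ₂ : ℝ) :
    sin (θ₂ - θ₁) • dirVec θ = sin (θ₂ - θ) • dirVec θ₁ + sin (θ - θ₁) • dirVec θ₂ := by
  ext i; fin_cases i <;>
  · simp only [sin_sub, dirVec, Fin.zero_eta, Fin.mk_one, PiLp.smul_apply, PiLp.add_apply,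
      smul_eq_mul, Matrix.cons_val_zero, Matrix.cons_val_one, Matrix.cons_val_fin_one]
    ring

lemma exists_pos_smul_dirVec {v : Plane} (hv : v ≠ 0) :
    ∃ r : ℝ, 0 < r ∧ ∃ φ, v = r • dirVec φ := by
  set z : ℂ := ⟨v 0, v 1⟩
  have hz : z ≠ 0 := fun h => hv <| by
    ext i; fin_cases i
    · exact congrArg Complex.re h
    · exact congrArg Complex.im h
  refine ⟨‖z‖, norm_pos_iff.2 hz, z.arg, ?_⟩
  ext i; fin_cases i
  · exact (Complex.norm_mul_cos_arg z).symm
  · exact (Complex.norm_mul_sin_arg z).symm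

def SupportsAt (K : Set Plane) (P u : Plane) : Prop :=
  ∀ x ∈ K, crossProd u P ≤ crossProd u x

lemma mem_suppLine_iff_supportsAt {K : Set Plane} (hK : IsCompact K) {P : Plane} (hP : P ∈ K)
    (θ : ℝ) : P ∈ suppLine K θ ↔ SupportsAt K P (dirVec θ) := by
  have hbdd := (hK.image (continuous_crossProd_right (dirVec θ))).bddBelow
  refine ⟨fun h x hx => h ▸ csInf_le hbdd (mem_image_of_mem _ hx), fun h => ?_⟩
  exact le_antisymm (le_csInf ⟨_, mem_image_of_mem _ hP⟩ (forall_mem_image.2 h))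
    (csInf_le hbdd (mem_image_of_mem _ hP))

lemma isClosed_setOf_supportsAt_dirVec (K : Set Plane) (P : Plane) :
    IsClosed {θ | SupportsAt K P (dirVec θ)} := by
  simp only [SupportsAt, ofPred_forall]
  refine isClosed_iInter fun x => isClosed_iInter fun _ => isClosed_le ?_ ?_ <;>
    simp only [crossProd, dirVec] <;> fun_prop

namespace SupportsAt

variable {K : Set Plane} {P u v : Plane}

lemma add (hu : SupportsAt K P u) (hv : SupportsAt K P v) : SupportsAt K P (u + v) :=
  fun x hx => by simp only [crossProd_add_left]; linarith [hu x hx, hv x hx]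

lemma smul (hu : SupportsAt K P u) {c : ℝ} (hc : 0 ≤ c) : SupportsAt K P (c • u) :=
  fun x hx => by simp only [crossProd_smul_left]; exact mul_le_mul_of_nonneg_left (hu x hx) hc

lemma of_smul {c : ℝ} (hc : 0 < c) (hu : SupportsAt K P (c • u)) : SupportsAt K P u :=
  fun x hx => le_of_mul_le_mul_left (by simpa only [crossProd_smul_left] using hu x hx) hc

lemma dirVec_of_mem_Icc {θ₁ θ₂ θ : ℝ} (h₁ : SupportsAt K P (dirVec θ₁))
    (h₂ : SupportsAt K P (dirVec θ₂)) (hθ : θ ∈ Icc θ₁ θ₂) (hπ : θ₂ - θ₁ < π) :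
    SupportsAt K P (dirVec θ) := by
  obtain rfl | hlt := hθ.1.eq_or_lt
  · exact h₁
  refine of_smul (sin_pos_of_pos_of_lt_pi (by linarith [hθ.2]) hπ) ?_
  rw [sin_sub_smul_dirVec θ₁ θ θ₂]
  exact (h₁.smul (sin_nonneg_of_nonneg_of_le_pi (by linarith [hθ.2]) (by linarith))).add
    (h₂.smul (sin_nonneg_of_nonneg_of_le_pi (by linarith) (by linarith [hθ.2])))

open Filter Topology in
lemma crossProd_lt_of_mem_interior {θ : ℝ} {Q : Plane} (h : SupportsAt K P (dirVec θ))
    (hQ : Q ∈ interior K) : crossProd (dirVec θ) P < crossProd (dirVec θ) Q := by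
  set w := dirVec (θ + π / 2)
  have hw : crossProd (dirVec θ) w = 1 := by
    rw [crossProd_dirVec_dirVec, add_sub_cancel_left, sin_pi_div_two]
  have hlim : Tendsto (fun ε : ℝ => Q - ε • w) (𝓝[>] 0) (𝓝 Q) :=
    tendsto_nhdsWithin_of_tendsto_nhds (Continuous.tendsto' (by fun_prop) 0 Q (by simp))
  obtain ⟨ε, hεK, hε⟩ :=
    ((hlim.eventually (mem_interior_iff_mem_nhds.1 hQ)).and self_mem_nhdsWithin).exists
  have := h _ hεK
  rw [crossProd_sub_right, crossProd_smul_right, hw] at this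
  linarith

lemma sin_sub_pos {θ φ r : ℝ} {Q : Plane} (h : SupportsAt K P (dirVec θ))
    (hQ : Q ∈ interior K) (hQP : Q - P = r • dirVec φ) (hr : 0 < r) : 0 < sin (φ - θ) := by
  have hlt := sub_pos.2 (h.crossProd_lt_of_mem_interior hQ)
  rw [← crossProd_sub_right, hQP, crossProd_smul_right, crossProd_dirVec_dirVec] at hlt
  exact pos_of_mul_pos_right hlt hr.le

end SupportsAt

lemma exists_supportsAt_dirVec {K : Set Plane} (hconv : Convex ℝ K)
    (hint : (interior K).Nonempty) {P : Plane} (hP : P ∉ interior K) :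
    ∃ θ, SupportsAt K P (dirVec θ) := by
  obtain ⟨f, hf0, hfP⟩ := geometric_hahn_banach_of_nonempty_interior_point hconv hP hint
  obtain ⟨v, hv⟩ := exists_crossProd_eq_neg_apply f.toLinearMap
  have hv0 : v ≠ 0 := by
    rintro rfl
    exact hf0 <| ContinuousLinearMap.ext fun x => by simpa [crossProd] using (hv x).symm
  obtain ⟨r, hr, θ, rfl⟩ := exists_pos_smul_dirVec hv0
  exact ⟨θ, SupportsAt.of_smul hr fun x hx => by
    simpa only [hv, ContinuousLinearMap.coe_coe, neg_le_neg_iff] using hfP x hx⟩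

/-- For a compact convex planar set with nonempty interior and an extreme point `P`,
the set of support directions through `P` is a closed arc (mod 2π) of length < π. -/
theorem extremePoint_support_arc (K : Set Plane) (hK : IsCompact K) (hconv : Convex ℝ K)
    (hint : (interior K).Nonempty) (P : Plane) (hP : P ∈ Set.extremePoints ℝ K) :
    ∃ α l : ℝ, 0 ≤ l ∧ l < π ∧
      ∀ θ : ℝ, P ∈ suppLine K θ ↔ ∃ t ∈ Icc α (α + l), ∃ k : ℤ, θ = t + 2 * π * k := by
  have hPint : P ∉ interior K := disjoint_right.1 (disjoint_interior_extremePoints K) hP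
  obtain ⟨θ₀, hθ₀⟩ := exists_supportsAt_dirVec hconv hint hPint
  obtain ⟨Q, hQ⟩ := hint
  obtain ⟨r, hr, φ, hQP⟩ :=
    exists_pos_smul_dirVec (sub_ne_zero.2 (ne_of_mem_of_not_mem hQ hPint))
  obtain ⟨α, l, hl, hlπ, harc⟩ := exists_short_arc_of_sin_sub_pos
    (isClosed_setOf_supportsAt_dirVec K P) ⟨θ₀, hθ₀⟩
    (fun θ hθ k => by rwa [mem_ofPred_eq, dirVec_add_two_pi_mul_int])
    (fun θ hθ => hθ.sin_sub_pos hQ hQP hr)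
    (fun θ₁ h₁ θ₂ h₂ hπ θ hθ => SupportsAt.dirVec_of_mem_Icc h₁ h₂ hθ hπ)
  exact ⟨α, l, hl, hlπ, fun θ => (mem_suppLine_iff_supportsAt hK hP.1 θ).trans (harc θ)⟩

end
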